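/- Let U be a finite set of UEs and B a finite set of BSs, with path-loss coefficients q_{lk} > 0 for each BS l and UE k, transmit power P > 0 and noise power N0 > 0. Let (B_m, U_m) and (B_n, U_n) be two subnetworks with B_m, B_n ⊆ B disjoint and U_m, U_n ⊆ U disjoint. Then the capacity of the merged subnetwork satisfies C_sub(B_m ∪ B_n, U_m ∪ U_n) ≥ C_sub(B_m, U_m) + C_sub(B_n, U_n). -/

import Mathlib

/-! Capacity is additive over disjoint sets of BSs, and the rate of each BS only grows with
the UE set of its subnetwork: enlarging `U_m` moves gain from the interference term into the
signal term. Merging therefore gives every BS of `B_m` and of `B_n` at least its old rate. -/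

open Finset

/-- Ergodic capacity of the subnetwork consisting of BSs `Bm` and UEs `Um`,
within the whole network whose UE set is `U`:
`C_sub(B_m, U_m) = Σ_{l ∈ B_m} log₂(1 + P·(Σ_{k ∈ U_m} q_{lk}²)/(N0 + P·Σ_{k ∈ U∖U_m} q_{lk}²))`. -/
noncomputable def Csub {ιU ιB : Type*} [DecidableEq ιU]
    (U : Finset ιU) (q : ιB → ιU → ℝ) (P N0 : ℝ)
    (Bm : Finset ιB) (Um : Finset ιU) : ℝ :=
  ∑ l ∈ Bm, Real.logb 2
    (1 + P * (∑ k ∈ Um, q l k ^ 2) / (N0 + P * ∑ k ∈ U \ Um, q l k ^ 2))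

lemma logb_one_add_sinr_mono {ι : Type*} [DecidableEq ι] (U : Finset ι) (w : ι → ℝ)
    (hw : ∀ k, 0 ≤ w k) {P N0 : ℝ} (hP : 0 ≤ P) (hN0 : 0 < N0) {S T : Finset ι}
    (hST : S ⊆ T) :
    Real.logb 2 (1 + P * (∑ k ∈ S, w k) / (N0 + P * ∑ k ∈ U \ S, w k)) ≤
      Real.logb 2 (1 + P * (∑ k ∈ T, w k) / (N0 + P * ∑ k ∈ U \ T, w k)) := by
  have hsignal : ∑ k ∈ S, w k ≤ ∑ k ∈ T, w k :=
    sum_le_sum_of_subset_of_nonneg hST fun k _ _ => hw k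
  have hinterf : ∑ k ∈ U \ T, w k ≤ ∑ k ∈ U \ S, w k :=
    sum_le_sum_of_subset_of_nonneg (sdiff_subset_sdiff le_rfl hST) fun k _ _ => hw k
  have hS : 0 ≤ ∑ k ∈ S, w k := sum_nonneg fun k _ => hw k
  have hT : 0 ≤ ∑ k ∈ T, w k := hS.trans hsignal
  have hUT : 0 ≤ ∑ k ∈ U \ T, w k := sum_nonneg fun k _ => hw k
  have hsinr : P * (∑ k ∈ S, w k) / (N0 + P * ∑ k ∈ U \ S, w k) ≤
      P * (∑ k ∈ T, w k) / (N0 + P * ∑ k ∈ U \ T, w k) :=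
    div_le_div₀ (by positivity) (by gcongr) (by positivity) (by gcongr)
  have hpos : 0 < 1 + P * (∑ k ∈ S, w k) / (N0 + P * ∑ k ∈ U \ S, w k) := by
    have : 0 ≤ ∑ k ∈ U \ S, w k := sum_nonneg fun k _ => hw k
    positivity
  exact Real.logb_le_logb_of_le one_lt_two hpos (by linarith)

lemma Csub_mono_right {ιU ιB : Type*} [DecidableEq ιU] (U : Finset ιU) (q : ιB → ιU → ℝ)
    {P N0 : ℝ} (hP : 0 ≤ P) (hN0 : 0 < N0) (Bm : Finset ιB) {Um Um' : Finset ιU}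
    (h : Um ⊆ Um') :
    Csub U q P N0 Bm Um ≤ Csub U q P N0 Bm Um' :=
  sum_le_sum fun l _ =>
    logb_one_add_sinr_mono U (fun k => q l k ^ 2) (fun _ => sq_nonneg _) hP hN0 h

lemma Csub_union_left {ιU ιB : Type*} [DecidableEq ιU] [DecidableEq ιB] (U : Finset ιU)
    (q : ιB → ιU → ℝ) (P N0 : ℝ) {Bm Bn : Finset ιB} (h : Disjoint Bm Bn) (Um : Finset ιU) :
    Csub U q P N0 (Bm ∪ Bn) Um = Csub U q P N0 Bm Um + Csub U q P N0 Bn Um :=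
  sum_union h

theorem merge_superadditive_general {ιU ιB : Type*} [DecidableEq ιU] [DecidableEq ιB]
    (U : Finset ιU) (q : ιB → ιU → ℝ)
    (P N0 : ℝ) (hP : 0 < P) (hN0 : 0 < N0)
    (Bm Bn : Finset ιB) (Um Un : Finset ιU)
    (hBdisj : Disjoint Bm Bn) :
    Csub U q P N0 Bm Um + Csub U q P N0 Bn Un ≤
      Csub U q P N0 (Bm ∪ Bn) (Um ∪ Un) := by
  rw [Csub_union_left U q P N0 hBdisj]
  exact add_le_add (Csub_mono_right U q hP.le hN0 Bm subset_union_left)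
    (Csub_mono_right U q hP.le hN0 Bn subset_union_right)

/-- Superadditivity of subnetwork capacity under merging (inequality (46)). -/
theorem merge_superadditive {ιU ιB : Type*} [DecidableEq ιU] [DecidableEq ιB]
    (U : Finset ιU) (B : Finset ιB) (q : ιB → ιU → ℝ) (hq : ∀ l k, 0 < q l k)
    (P N0 : ℝ) (hP : 0 < P) (hN0 : 0 < N0)
    (Bm Bn : Finset ιB) (Um Un : Finset ιU)
    (hBm : Bm ⊆ B) (hBn : Bn ⊆ B) (hUm : Um ⊆ U) (hUn : Un ⊆ U)
    (hBdisj : Disjoint Bm Bn) (hUdisj : Disjoint Um Un) :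
    Csub U q P N0 Bm Um + Csub U q P N0 Bn Un ≤
      Csub U q P N0 (Bm ∪ Bn) (Um ∪ Un) :=
  merge_superadditive_general U q P N0 hP hN0 Bm Bn Um Un hBdisj
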